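/- Define B(p) for integers p ≥ 5 to be an arbitrary predicate. Suppose B(5) holds, and whenever B(p) holds for some p ≥ 5, both B(2p − 4) and B(2p − 3) hold. Then B(p) holds for all integers p ≥ 5. -/
import Mathlib

/-- Doubling induction: from `B(5)` and `B(p) → B(2p−4) ∧ B(2p−3)`,
deduce `B(p)` for all `p ≥ 5`. -/
theorem stmt_11 (B : ℕ → Prop) (h5 : B 5)
    (hstep : ∀ p, 5 ≤ p → B p → B (2 * p - 4) ∧ B (2 * p - 3)) :
    ∀ p, 5 ≤ p → B p := by
  intro p
  induction p using Nat.strong_induction_on with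
  | _ p ih =>
    intro hp
    rcases eq_or_lt_of_le hp with h | h6
    · exact h ▸ h5
    · rcases Nat.even_or_odd p with ⟨k, hk⟩ | ⟨k, hk⟩
      · -- p = 2k, q = k+2, 2q-4 = p
        have hq : 5 ≤ k + 2 := by omega
        have hBq := ih (k + 2) (by omega) hq
        have := (hstep (k + 2) hq hBq).1
        have : B p := by
          have e : 2 * (k + 2) - 4 = p := by omega
          rwa [e] at this
        exact this
      · have hq : 5 ≤ k + 2 := by omega
        have hBq := ih (k + 2) (by omega) hq
        have := (hstep (k + 2) hq hBq).2
        have e : 2 * (k + 2) - 3 = p := by omega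
        rwa [e] at this
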